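/- Let C be a finite set with |C| ≥ 2 and let N : C × C → ℤ be antisymmetric (N(a,b) = −N(b,a) for all a,b) with N(a,b) odd for every pair of distinct candidates a,b. Then there exists a profile P, consisting of an odd number of votes, whose net advantage function equals N, i.e., netadv_P(a,b) = N(a,b) for all distinct a,b. -/

import Mathlib

/-!
McGarvey's construction. Concatenating profiles adds net advantages and reversing every vote
negates them, so the net advantage functions of profiles form an additive group. If `b` sits
directly below `a` in a vote `v`, exchanging `a` and `b` in `v` changes the comparison of that
pair only; hence `[v]` minus the exchanged vote has net advantage `2` on `(a, b)`, `-2` on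
`(b, a)` and `0` elsewhere, and nonnegative multiples of these generate every antisymmetric
function with even values off the diagonal. Subtracting the net advantage of a single vote
(`±1` on each pair) makes `N` even, and since `netadv P a b ≡ P.length (mod 2)` for `a ≠ b`,
the resulting profile has odd length.
-/

/-- A vote over a finite candidate set `C` is a linear order on `C`, encoded as the
ranking equivalence sending each candidate to its position (position `0` is the top). -/
abbrev Vote (C : Type*) [Fintype C] : Type _ := C ≃ Fin (Fintype.card C)

/-- `adv P a b` is the number of votes in the profile `P` ranking `a` above `b`. -/
def adv {C : Type*} [Fintype C] (P : List (Vote C)) (a b : C) : ℕ :=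
  P.countP (fun v => decide (v a < v b))

/-- The net advantage of `a` over `b` in the profile `P`. -/
def netadv {C : Type*} [Fintype C] (P : List (Vote C)) (a b : C) : ℤ :=
  (adv P a b : ℤ) - (adv P b a : ℤ)

theorem Equiv.exists_apply_eq_and_apply_eq {α β : Type*} [DecidableEq β] (e : α ≃ β)
    {a b : α} (hab : a ≠ b) {i j : β} (hij : i ≠ j) : ∃ f : α ≃ β, f a = i ∧ f b = j := by
  set g := e.trans (Equiv.swap (e a) i)
  have hga : g a = i := Equiv.swap_apply_left _ _
  refine ⟨g.trans (Equiv.swap (g b) j), ?_, Equiv.swap_apply_left _ _⟩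
  rw [Equiv.trans_apply, hga, Equiv.swap_apply_of_ne_of_ne (hga ▸ g.injective.ne hab) hij]

section Netadv

variable {C : Type*} [Fintype C]

theorem netadv_comm (P : List (Vote C)) (a b : C) : netadv P a b = -netadv P b a := by
  simp only [netadv]; ring

theorem netadv_append (P Q : List (Vote C)) (a b : C) :
    netadv (P ++ Q) a b = netadv P a b + netadv Q a b := by
  simp only [netadv, adv, List.countP_append, Nat.cast_add]; ring

theorem netadv_map_trans_revPerm (P : List (Vote C)) (a b : C) :
    netadv (P.map (·.trans Fin.revPerm)) a b = -netadv P a b := by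
  have hadv : ∀ x y, adv (P.map (·.trans Fin.revPerm)) x y = adv P y x := fun x y => by
    simp only [adv, List.countP_map]
    congr 1; funext v
    simp [Fin.rev_lt_rev]
  rw [netadv, netadv, hadv, hadv]; ring

theorem netadv_singleton (v : Vote C) (a b : C) :
    netadv [v] a b = (if v a < v b then 1 else 0) - if v b < v a then 1 else 0 := by
  simp only [netadv, adv, List.countP_singleton]
  split_ifs <;> simp_all

theorem adv_add_adv {a b : C} (hab : a ≠ b) (P : List (Vote C)) :
    adv P a b + adv P b a = P.length := by
  rw [List.length_eq_countP_add_countP (fun v : Vote C => decide (v a < v b)), adv, adv]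
  congr 1
  refine List.countP_congr fun v _ => ?_
  have : v a ≠ v b := v.injective.ne hab
  simp only [decide_eq_true_eq]
  omega

theorem odd_netadv_iff {a b : C} (hab : a ≠ b) (P : List (Vote C)) :
    Odd (netadv P a b) ↔ Odd P.length := by
  have : netadv P a b = 2 * adv P a b - P.length := by
    rw [netadv, ← adv_add_adv hab P]; push_cast; ring
  rw [this, Int.odd_sub', Int.odd_coe_nat]
  simp

theorem exists_vote_adjacent {a b : C} (hab : a ≠ b) : ∃ v : Vote C, (v b : ℕ) = v a + 1 := by
  have hC : 1 < Fintype.card C := Fintype.one_lt_card_iff.2 ⟨a, b, hab⟩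
  obtain ⟨v, ha, hb⟩ := (Fintype.equivFin C).exists_apply_eq_and_apply_eq hab
    (i := ⟨0, by omega⟩) (j := ⟨1, hC⟩) (by simp [Fin.ext_iff])
  exact ⟨v, by simp [ha, hb]⟩

end Netadv

def netadvSubgroup (C : Type*) [Fintype C] : AddSubgroup (C × C → ℤ) where
  carrier := Set.range fun P p => netadv P p.1 p.2
  zero_mem' := ⟨[], funext fun _ => by simp [netadv, adv]⟩
  add_mem' := by
    rintro _ _ ⟨P, rfl⟩ ⟨Q, rfl⟩
    exact ⟨P ++ Q, funext fun p => netadv_append P Q p.1 p.2⟩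
  neg_mem' := by
    rintro _ ⟨P, rfl⟩
    exact ⟨P.map (·.trans Fin.revPerm), funext fun p => netadv_map_trans_revPerm P p.1 p.2⟩

section Realization

variable {C : Type*} [Fintype C] [DecidableEq C]

theorem apply_swap_lt_apply_swap_iff {v : Vote C} {a b x y : C} (hadj : (v b : ℕ) = v a + 1)
    (hab : ¬(x = a ∧ y = b)) (hba : ¬(x = b ∧ y = a)) :
    v (Equiv.swap a b x) < v (Equiv.swap a b y) ↔ v x < v y := by
  have hinj : ∀ c d, (v c : ℕ) = v d → c = d := fun c d h => v.injective (Fin.ext h)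
  simp only [Fin.lt_def, Equiv.swap_apply_def]
  grind

theorem netadv_singleton_sub_swap {v : Vote C} {a b : C} (hadj : (v b : ℕ) = v a + 1) (x y : C) :
    netadv [v] x y - netadv [(Equiv.swap a b).trans v] x y =
      2 * (Pi.single (a, b) 1 - Pi.single (b, a) 1 : C × C → ℤ) (x, y) := by
  have hlt : v a < v b := by rw [Fin.lt_def]; omega
  have hab : a ≠ b := by rintro rfl; omega
  simp only [netadv_singleton, Equiv.trans_apply]
  by_cases h₁ : x = a ∧ y = b
  · obtain ⟨rfl, rfl⟩ := h₁
    simp [hlt, not_lt.2 hlt.le, hab]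
  by_cases h₂ : x = b ∧ y = a
  · obtain ⟨rfl, rfl⟩ := h₂
    simp [hlt, not_lt.2 hlt.le, hab]
  simp only [apply_swap_lt_apply_swap_iff hadj h₁ h₂,
    apply_swap_lt_apply_swap_iff (x := y) (y := x) hadj (by tauto) (by tauto)]
  simp [h₁, h₂]

theorem two_smul_single_sub_single_mem_netadvSubgroup {a b : C} (hab : a ≠ b) :
    2 • (Pi.single (a, b) 1 - Pi.single (b, a) 1 : C × C → ℤ) ∈ netadvSubgroup C := by
  obtain ⟨v, hadj⟩ := exists_vote_adjacent hab
  have hdiff : 2 • (Pi.single (a, b) 1 - Pi.single (b, a) 1 : C × C → ℤ) =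
      (fun p => netadv [v] p.1 p.2) - fun p => netadv [(Equiv.swap a b).trans v] p.1 p.2 := by
    funext p
    rw [Pi.sub_apply, netadv_singleton_sub_swap hadj, Pi.smul_apply, nsmul_eq_mul, Nat.cast_ofNat]
  rw [hdiff]
  exact sub_mem ⟨_, rfl⟩ ⟨_, rfl⟩

theorem sum_offDiag_nsmul_two_smul_apply (c : C × C → ℕ) {a b : C} (hab : a ≠ b) :
    (∑ p ∈ Finset.univ.offDiag, c p • 2 • (Pi.single p 1 - Pi.single p.swap 1 : C × C → ℤ))
      (a, b) = 2 * ((c (a, b) : ℤ) - c (b, a)) := by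
  have hswap : ∀ p : C × C, (a, b) = p.swap ↔ (b, a) = p := fun p => by
    rw [eq_comm, Prod.swap_eq_iff_eq_swap, eq_comm, Prod.swap_prod_mk]
  simp only [Finset.sum_apply, Pi.smul_apply, Pi.sub_apply, Pi.single_apply]
  simp only [nsmul_eq_mul, Nat.cast_ofNat, mul_sub, mul_ite, mul_one, mul_zero, hswap,
    Finset.sum_sub_distrib, Finset.sum_ite_eq, Finset.mem_offDiag, Finset.mem_univ, true_and,
    if_pos hab, if_pos hab.symm]
  ring

theorem exists_netadv_eq_of_even (M : C × C → ℤ) (hanti : ∀ a b, a ≠ b → M (a, b) = -M (b, a))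
    (heven : ∀ a b, a ≠ b → Even (M (a, b))) :
    ∃ P : List (Vote C), ∀ a b, a ≠ b → netadv P a b = M (a, b) := by
  -- `p` and `p.swap` are both summed over, and only the one where `M` is positive contributes
  have hmem : ∑ p ∈ Finset.univ.offDiag,
      (M p / 2).toNat • 2 • (Pi.single p 1 - Pi.single p.swap 1 : C × C → ℤ) ∈ netadvSubgroup C :=
    sum_mem fun p hp => nsmul_mem
      (two_smul_single_sub_single_mem_netadvSubgroup (Finset.mem_offDiag.1 hp).2.2) _
  obtain ⟨P, hP⟩ := hmem
  refine ⟨P, fun a b hab => ?_⟩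
  obtain ⟨k, hk⟩ := heven a b hab
  have hab2 : M (a, b) / 2 = k := by omega
  have hba2 : M (b, a) / 2 = -k := by rw [hanti b a hab.symm]; omega
  rw [show netadv P a b = _ from congrFun hP (a, b), sum_offDiag_nsmul_two_smul_apply _ hab,
    hab2, hba2, Int.toNat_sub_toNat_neg, hk]
  ring

end Realization

/-- **McGarvey's method, odd case.** Every antisymmetric integer-valued function `N` on
pairs of candidates whose value is odd on every pair of distinct candidates is the net
advantage function of some profile consisting of an odd number of votes. -/
theorem mcgarvey_odd {C : Type*} [Fintype C] [DecidableEq C]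
    (hm : 2 ≤ Fintype.card C)
    (N : C × C → ℤ)
    (hanti : ∀ a b : C, N (a, b) = - N (b, a))
    (hodd : ∀ a b : C, a ≠ b → Odd (N (a, b))) :
    ∃ P : List (Vote C),
      Odd P.length ∧
      ∀ a b : C, a ≠ b → netadv P a b = N (a, b) := by
  obtain ⟨v₀⟩ : Nonempty (Vote C) := ⟨Fintype.equivFin C⟩
  obtain ⟨Q, hQ⟩ := exists_netadv_eq_of_even (fun p => N p - netadv [v₀] p.1 p.2)
    (fun a b _ => by rw [hanti a b, netadv_comm [v₀] a b]; ring)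
    (fun a b hab => (hodd a b hab).sub_odd ((odd_netadv_iff hab [v₀]).2 odd_one))
  have hP : ∀ a b : C, a ≠ b → netadv (v₀ :: Q) a b = N (a, b) := fun a b hab => by
    rw [← List.singleton_append, netadv_append, hQ a b hab]
    ring
  refine ⟨v₀ :: Q, ?_, hP⟩
  obtain ⟨a, b, hab⟩ := Fintype.exists_pair_of_one_lt_card hm
  rw [← odd_netadv_iff hab, hP a b hab]
  exact hodd a b hab
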